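/- arXiv:2205.05274 — 7 statements merged into one kernel-verified Lean document; each statement's English description precedes it below -/
import Mathlib

section
/- Let G be a connected finite simple graph with connected domination number γ_c(G) ≥ 2, and let H be any finite simple graph (not necessarily connected) with at least 2 vertices. Then the connected power domination number of the lexicographic product satisfies γ_{P,c}(G ∘ H) = γ_c(G). -/
open SimpleGraph

variable {V : Type*} {α β : Type*}

/-- The monitored set `M(S)`: least set containing the closed neighborhood of `S`
and closed under the propagation rule (a monitored vertex all of whose neighbors,
except possibly one, are monitored forces that remaining neighbor). -/
inductive Monitored (G : SimpleGraph V) (S : Set V) : V → Prop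
  | mem : ∀ {v}, v ∈ S → Monitored G S v
  | dom : ∀ {v w}, v ∈ S → G.Adj v w → Monitored G S w
  | prop : ∀ {v w}, Monitored G S v → G.Adj v w →
      (∀ u, G.Adj v u → u ≠ w → Monitored G S u) → Monitored G S w

/-- `S` is a power dominating set of `G`. -/
def IsPDS (G : SimpleGraph V) (S : Set V) : Prop := ∀ v, Monitored G S v

/-- `S` is a connected power dominating set of `G`. -/
def IsCPDS (G : SimpleGraph V) (S : Set V) : Prop :=
  IsPDS G S ∧ (G.induce S).Connected

/-- The connected power domination number `γ_{P,c}(G)`. -/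
noncomputable def cpdn (G : SimpleGraph V) : ℕ :=
  sInf {n | ∃ S : Finset V, S.card = n ∧ IsCPDS G (S : Set V)}

/-- Zero-forcing: least set containing `Z` closed under the color-change rule. -/
inductive Forced (G : SimpleGraph V) (Z : Set V) : V → Prop
  | mem : ∀ {v}, v ∈ Z → Forced G Z v
  | force : ∀ {v w}, Forced G Z v → G.Adj v w →
      (∀ u, G.Adj v u → u ≠ w → Forced G Z u) → Forced G Z w

/-- `Z` is a zero forcing set of `G`. -/
def IsZFS (G : SimpleGraph V) (Z : Set V) : Prop := ∀ v, Forced G Z v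

/-- `Z` is a connected zero forcing set of `G`. -/
def IsCZFS (G : SimpleGraph V) (Z : Set V) : Prop :=
  IsZFS G Z ∧ (G.induce Z).Connected

/-- The connected zero forcing number `Z_c(G)`. -/
noncomputable def czfn (G : SimpleGraph V) : ℕ :=
  sInf {n | ∃ Z : Finset V, Z.card = n ∧ IsCZFS G (Z : Set V)}

/-- `S` is a dominating set of `G`: `N[S] = V(G)`. -/
def IsDomSet (G : SimpleGraph V) (S : Set V) : Prop :=
  ∀ v, ∃ u ∈ S, u = v ∨ G.Adj u v

/-- `S` is a connected dominating set of `G`. -/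
def IsCDS (G : SimpleGraph V) (S : Set V) : Prop :=
  IsDomSet G S ∧ (G.induce S).Connected

/-- The domination number `γ(G)`. -/
noncomputable def domNum (G : SimpleGraph V) : ℕ :=
  sInf {n | ∃ S : Finset V, S.card = n ∧ IsDomSet G (S : Set V)}

/-- The connected domination number `γ_c(G)`. -/
noncomputable def cdomNum (G : SimpleGraph V) : ℕ :=
  sInf {n | ∃ S : Finset V, S.card = n ∧ IsCDS G (S : Set V)}

/-- The lexicographic product `G ∘ H`. -/
def lexProd (G : SimpleGraph α) (H : SimpleGraph β) : SimpleGraph (α × β) where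
  Adj x y := G.Adj x.1 y.1 ∨ (x.1 = y.1 ∧ H.Adj x.2 y.2)
  symm := ⟨by
    rintro ⟨a, b⟩ ⟨c, d⟩ (h | ⟨h1, h2⟩)
    · exact Or.inl h.symm
    · exact Or.inr ⟨h1.symm, h2.symm⟩⟩
  loopless := ⟨by
    rintro ⟨a, b⟩ (h | ⟨-, h⟩)
    · exact G.loopless.irrefl a h
    · exact H.loopless.irrefl b h⟩

/-- The tensor (direct) product `G × H`. -/
def tensorProd (G : SimpleGraph α) (H : SimpleGraph β) : SimpleGraph (α × β) where
  Adj x y := G.Adj x.1 y.1 ∧ H.Adj x.2 y.2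
  symm := ⟨fun _ _ ⟨h1, h2⟩ => ⟨h1.symm, h2.symm⟩⟩
  loopless := ⟨fun x ⟨h1, _⟩ => G.loopless.irrefl x.1 h1⟩

/-- A vertex `v` is universal in `G`. -/
def IsUniversal (G : SimpleGraph V) (v : V) : Prop := ∀ w, w ≠ v → G.Adj v w

/-- The join of a single vertex (`none`) with the graph `G` (on `some` vertices). -/
def coneGraph (G : SimpleGraph α) : SimpleGraph (Option α) where
  Adj x y := match x, y with
    | none, none => False
    | none, some _ => True
    | some _, none => True
    | some a, some b => G.Adj a b
  symm := ⟨by rintro (_ | a) (_ | b) h <;> first | trivial | exact h.symm⟩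
  loopless := ⟨by rintro (_ | a) h <;> first | trivial | exact G.loopless.irrefl a h⟩

/-- The wheel `W_n`: the join of a single vertex with the cycle `C_n`. -/
def wheelGraph (n : ℕ) : SimpleGraph (Option (Fin n)) := coneGraph (cycleGraph n)

/-- The fan `F_n`: the join of a single vertex with the path `P_n`. -/
def fanGraph (n : ℕ) : SimpleGraph (Option (Fin n)) := coneGraph (pathGraph n)

/-!
If `T` power-dominates `G ∘ H` and `H` has two vertices, then `π₁(T)` dominates `G`: a vertex
`(a, y)` whose `G`-coordinate `a` is undominated can only be forced from another fibre, but a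
vertex `(x, z)` with `x ~ a` sees the whole fibre over `a`, which has at least two unmonitored
vertices. Projection also preserves connectivity, so `γ_c(G) ≤ γ_{P,c}(G ∘ H)`. Conversely, a
connected dominating set `S` with `|S| ≥ 2` is total, so `S × {b}` dominates `G ∘ H` and is
connected.
-/

namespace SimpleGraph

theorem Reachable.map_of_adj_imp_eq_or_adj {W : Type*} {G : SimpleGraph V} {G' : SimpleGraph W}
    {f : V → W}
    (hf : ∀ ⦃u v⦄, G.Adj u v → f u = f v ∨ G'.Adj (f u) (f v)) {u v : V}
    (h : G.Reachable u v) : G'.Reachable (f u) (f v) := by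
  obtain ⟨p⟩ := h
  induction p with
  | nil => rfl
  | cons hadj _ ih =>
    rcases hf hadj with heq | hadj'
    · exact heq ▸ ih
    · exact hadj'.reachable.trans ih

theorem Connected.of_surjective_of_adj_imp_eq_or_adj {W : Type*} {G : SimpleGraph V}
    {G' : SimpleGraph W} {f : V → W} (hG : G.Connected) (hsurj : Function.Surjective f)
    (hf : ∀ ⦃u v⦄, G.Adj u v → f u = f v ∨ G'.Adj (f u) (f v)) : G'.Connected where
  preconnected x y := by
    obtain ⟨u, rfl⟩ := hsurj x
    obtain ⟨v, rfl⟩ := hsurj y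
    exact (hG.preconnected u v).map_of_adj_imp_eq_or_adj hf
  nonempty := hG.nonempty.map f

end SimpleGraph

theorem IsCDS.exists_adj {G : SimpleGraph V} {S : Set V} (hS : IsCDS G S) (hS2 : S.Nontrivial)
    (a : V) : ∃ s ∈ S, G.Adj s a := by
  by_cases ha : a ∈ S
  · have : Nontrivial S := hS2.coe_sort
    obtain ⟨s, hs⟩ := hS.2.preconnected.exists_adj_of_nontrivial ⟨a, ha⟩
    exact ⟨s, s.2, hs.symm⟩
  · obtain ⟨s, hs, rfl | hadj⟩ := hS.1 a
    · exact absurd hs ha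
    · exact ⟨s, hs, hadj⟩

theorem IsCDS.isCPDS_lexProd_prod_singleton {G : SimpleGraph α} (H : SimpleGraph β) {S : Set α}
    (hS : IsCDS G S) (hS2 : S.Nontrivial) (b : β) : IsCPDS (lexProd G H) (S ×ˢ {b}) := by
  refine ⟨fun x => ?_, ?_⟩
  · obtain ⟨s, hs, hadj⟩ := hS.exists_adj hS2 x.1
    exact Monitored.dom (w := x) (v := (s, b)) ⟨hs, rfl⟩ (Or.inl hadj)
  · refine hS.2.of_surjective_of_adj_imp_eq_or_adj
      (f := fun s : S => (⟨(s.1, b), s.2, rfl⟩ : ↥(S ×ˢ {b}))) ?_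
      fun _ _ hadj => Or.inr (Or.inl hadj)
    rintro ⟨⟨a, _⟩, ha, rfl⟩
    exact ⟨⟨a, ha⟩, rfl⟩

theorem Monitored.exists_mem_image_fst {G : SimpleGraph α} {H : SimpleGraph β} [Nontrivial β]
    {T : Set (α × β)} {x : α × β} (hx : Monitored (lexProd G H) T x) :
    ∃ u ∈ Prod.fst '' T, u = x.1 ∨ G.Adj u x.1 := by
  induction hx with
  | @mem y hy => exact ⟨y.1, ⟨y, hy, rfl⟩, Or.inl rfl⟩
  | @dom y w hy hadj =>
    rcases hadj with hadjG | ⟨heq, -⟩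
    · exact ⟨y.1, ⟨y, hy, rfl⟩, Or.inr hadjG⟩
    · exact ⟨y.1, ⟨y, hy, rfl⟩, Or.inl heq⟩
  | @prop y w _ hadj _ ih ihall =>
    rcases hadj with hadjG | ⟨heq, -⟩
    · obtain ⟨b, hb⟩ := exists_ne w.2
      exact ihall (w.1, b) (Or.inl hadjG) fun h => hb (congrArg Prod.snd h)
    · exact heq ▸ ih

theorem IsCPDS.isCDS_image_fst {G : SimpleGraph α} {H : SimpleGraph β} [Nontrivial β]
    {T : Set (α × β)} (hT : IsCPDS (lexProd G H) T) : IsCDS G (Prod.fst '' T) := by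
  refine ⟨fun a => ?_, ?_⟩
  · obtain ⟨b⟩ := (inferInstance : Nonempty β)
    exact (hT.1 (a, b)).exists_mem_image_fst
  · refine hT.2.of_surjective_of_adj_imp_eq_or_adj (f := fun t => ⟨t.1.1, t.1, t.2, rfl⟩) ?_
      fun _ _ hadj => hadj.elim Or.inr fun h => Or.inl (Subtype.ext h.1)
    rintro ⟨_, t, ht, rfl⟩
    exact ⟨⟨t, ht⟩, rfl⟩

theorem stmt_0_general {α β : Type*} [Fintype β]
    (G : SimpleGraph α) (H : SimpleGraph β)
    (hHcard : 2 ≤ Fintype.card β)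
    (hγc : 2 ≤ cdomNum G) :
    cpdn (lexProd G H) = cdomNum G := by
  classical
  have : Nontrivial β := Fintype.one_lt_card_iff_nontrivial.mp hHcard
  obtain ⟨b⟩ := (inferInstance : Nonempty β)
  obtain ⟨S, hScard, hS⟩ : cdomNum G ∈ {n | ∃ S : Finset α, S.card = n ∧ IsCDS G (S : Set α)} :=
    Nat.sInf_mem (Nat.nonempty_of_pos_sInf (by unfold cdomNum at hγc; omega))
  have hS2 : (S : Set α).Nontrivial := Finset.one_lt_card_iff_nontrivial.mp (by omega)
  have hZ : IsCPDS (lexProd G H) ((S ×ˢ {b} : Finset (α × β)) : Set (α × β)) := by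
    simpa only [Finset.coe_product, Finset.coe_singleton] using
      hS.isCPDS_lexProd_prod_singleton H hS2 b
  have hub : cpdn (lexProd G H) ≤ cdomNum G :=
    Nat.sInf_le ⟨S ×ˢ {b}, by rw [Finset.card_product, Finset.card_singleton, mul_one, hScard], hZ⟩
  obtain ⟨T, hTcard, hT⟩ :
      cpdn (lexProd G H) ∈ {n | ∃ T : Finset (α × β), T.card = n ∧ IsCPDS (lexProd G H) T} :=
    Nat.sInf_mem ⟨_, _, rfl, hZ⟩
  have hlb : cdomNum G ≤ cpdn (lexProd G H) := calc
    cdomNum G ≤ (T.image Prod.fst).card :=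
      Nat.sInf_le ⟨_, rfl, by simpa only [Finset.coe_image] using hT.isCDS_image_fst⟩
    _ ≤ T.card := Finset.card_image_le
    _ = cpdn (lexProd G H) := hTcard
  omega

/-- If `γ_c(G) ≥ 2` then `γ_{P,c}(G ∘ H) = γ_c(G)`. -/
theorem stmt_0 {α β : Type*} [Fintype α] [Fintype β]
    (G : SimpleGraph α) (H : SimpleGraph β)
    (hG : G.Connected) (hHcard : 2 ≤ Fintype.card β)
    (hγc : 2 ≤ cdomNum G) :
    cpdn (lexProd G H) = cdomNum G :=
  stmt_0_general G H hHcard hγc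
end

section
/- Let G be a finite simple graph with at least 2 vertices having a universal vertex (i.e. γ(G) = 1), and let H be a finite simple graph (not necessarily connected) such that either H has a universal vertex (γ(H) = 1) or H is the empty graph on two vertices. Then γ_{P,c}(G ∘ H) = 1. -/
open SimpleGraph

variable {V : Type*} {α β : Type*}

/-
Let `g` be universal in `G` and pick `a₀ ≠ g`. The vertex `(g, b₀)` dominates every vertex outside
the fibre `{g} × V(H)` and the part `{g} × N_H[b₀]` of that fibre. If at most one vertex `y` of `H`
lies outside `N_H[b₀]` (always true when `b₀` is universal, and true for `K̄₂`), then `(a₀, b₀)`,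
whose neighbourhood contains the whole fibre over `g`, forces `(g, y)`.
-/

lemma cpdn_eq_one_of_isCPDS_singleton {G : SimpleGraph V} {x : V} (hx : IsCPDS G {x}) :
    cpdn G = 1 := by
  refine le_antisymm (Nat.sInf_le ⟨{x}, Finset.card_singleton x, by simpa using hx⟩) ?_
  refine le_csInf ⟨1, {x}, Finset.card_singleton x, by simpa using hx⟩ ?_
  rintro n ⟨S, rfl, -, hconn⟩
  obtain ⟨⟨v, hv⟩⟩ := hconn.nonempty
  exact Finset.card_pos.mpr ⟨v, hv⟩

lemma isPDS_lexProd_singleton {G : SimpleGraph α} {H : SimpleGraph β} {g a₀ : α} {b₀ y : β}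
    (hg : _root_.IsUniversal G g) (ha₀ : a₀ ≠ g) (hb₀ : ∀ b, b ≠ y → b = b₀ ∨ H.Adj b₀ b) :
    IsPDS (lexProd G H) {(g, b₀)} := by
  have off_fibre : ∀ p : α × β, p.1 ≠ g → Monitored (lexProd G H) {(g, b₀)} p :=
    fun p hp => Monitored.dom rfl (Or.inl (hg p.1 hp))
  have on_fibre : ∀ b, b ≠ y → Monitored (lexProd G H) {(g, b₀)} (g, b) := by
    intro b hb
    rcases hb₀ b hb with rfl | hadj
    · exact Monitored.mem rfl
    · exact Monitored.dom rfl (Or.inr ⟨rfl, hadj⟩)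
  rintro ⟨a, b⟩
  by_cases ha : a = g
  · subst ha
    by_cases hb : b = y
    · subst hb
      refine Monitored.prop (off_fibre (a₀, b₀) ha₀) (Or.inl (hg a₀ ha₀).symm) ?_
      rintro ⟨p, q⟩ - hne
      by_cases hp : p = a
      · subst hp
        exact on_fibre q fun hq => hne (hq ▸ rfl)
      · exact off_fibre (p, q) hp
    · exact on_fibre b hb
  · exact off_fibre (a, b) ha

/-- If `γ(G) = 1` and either `γ(H) = 1` or `H ≅ K̄₂`, then `γ_{P,c}(G ∘ H) = 1`. -/
theorem stmt_1 {α β : Type*} [Fintype α] [Fintype β]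
    (G : SimpleGraph α) (H : SimpleGraph β)
    (hGcard : 2 ≤ Fintype.card α)
    (hGuniv : ∃ v, _root_.IsUniversal G v)
    (hH : (∃ v, _root_.IsUniversal H v) ∨ (Fintype.card β = 2 ∧ H = ⊥)) :
    cpdn (lexProd G H) = 1 := by
  obtain ⟨g, hg⟩ := hGuniv
  obtain ⟨a₀, ha₀⟩ := Fintype.exists_ne_of_one_lt_card hGcard g
  obtain ⟨b₀, y, hb₀⟩ : ∃ b₀ y : β, ∀ b, b ≠ y → b = b₀ ∨ H.Adj b₀ b := by
    rcases hH with ⟨h, hh⟩ | ⟨hcard, -⟩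
    · exact ⟨h, h, fun b hb => Or.inr (hh b hb)⟩
    · rw [← Nat.card_eq_fintype_card, Nat.card_eq_two_iff] at hcard
      obtain ⟨x₀, y₀, -, huniv⟩ := hcard
      refine ⟨x₀, y₀, fun b hb => Or.inl ?_⟩
      have hb' : b ∈ ({x₀, y₀} : Set β) := huniv ▸ Set.mem_univ b
      simpa [hb] using hb'
  exact cpdn_eq_one_of_isCPDS_singleton
    ⟨isPDS_lexProd_singleton hg ha₀ hb₀, by simp⟩
end

section
/- Let G and H be connected finite simple graphs, each with at least 2 vertices. Then γ_{P,c}(G □ H) ≤ min{γ_{P,c}(G)·|V(H)|, γ_{P,c}(H)·|V(G)|}. -/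
open SimpleGraph

variable {V : Type*} {α β : Type*}

/-! If `S` is a connected power dominating set of `G`, then `S × V(H)` is one of `G □ H`: it
induces `G[S] □ H`, which is connected, and each layer `V(G) × {b}` is a copy of `G` in which the
propagation steps of `S` replay verbatim, because the neighbours of `(v, b)` outside the layer are
`(v, c)`, already monitored once `v` is. The bound in terms of `γ_{P,c}(H)` follows by symmetry. -/

section

variable {W : Type*} {G : SimpleGraph V} {G' : SimpleGraph W}

theorem Monitored.map_iso (e : G ≃g G') {S : Set V} {v : V} (hv : Monitored G S v) :
    Monitored G' (e '' S) (e v) := by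
  induction hv with
  | mem h => exact .mem ⟨_, h, rfl⟩
  | dom h hadj => exact .dom ⟨_, h, rfl⟩ (e.map_adj_iff.mpr hadj)
  | @prop v w _ hadj _ ih ihall =>
    refine .prop ih (e.map_adj_iff.mpr hadj) fun u hu hne => ?_
    rw [← e.apply_symm_apply u] at hu hne ⊢
    exact ihall _ (e.map_adj_iff.mp hu) (ne_of_apply_ne e hne)

theorem IsCPDS.image_iso (e : G ≃g G') {S : Set V} (hS : IsCPDS G S) :
    IsCPDS G' (e '' S) := by
  refine ⟨fun w => e.apply_symm_apply w ▸ (hS.1 _).map_iso e, hS.2.map ?_ ?_⟩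
  · exact induceHom e.toHom (Set.mapsTo_image e S)
  · rintro ⟨_, v, hv, rfl⟩
    exact ⟨⟨v, hv⟩, rfl⟩

theorem SimpleGraph.Iso.exists_isCPDS_card_eq (e : G ≃g G') {n : ℕ}
    (h : ∃ S : Finset V, S.card = n ∧ IsCPDS G S) : ∃ S : Finset W, S.card = n ∧ IsCPDS G' S := by
  obtain ⟨S, rfl, hS⟩ := h
  exact ⟨S.map e.toEquiv.toEmbedding, Finset.card_map _, by simpa using hS.image_iso e⟩

theorem SimpleGraph.Iso.cpdn_eq (e : G ≃g G') : cpdn G = cpdn G' := by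
  unfold cpdn
  congr 1
  ext n
  exact ⟨e.exists_isCPDS_card_eq, e.symm.exists_isCPDS_card_eq⟩

theorem cpdn_le_card {S : Finset V} (hS : IsCPDS G S) : cpdn G ≤ S.card :=
  Nat.sInf_le ⟨S, rfl, hS⟩

theorem exists_isCPDS_card_eq_cpdn [Fintype V] (hG : G.Connected) :
    ∃ S : Finset V, S.card = cpdn G ∧ IsCPDS G S := by
  have hUniv : IsCPDS G (Finset.univ : Finset V) := by
    rw [Finset.coe_univ]
    exact ⟨fun _ => .mem trivial, G.induceUnivIso.connected_iff.mpr hG⟩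
  exact Nat.sInf_mem (s := {n | ∃ S : Finset V, S.card = n ∧ IsCPDS G S}) ⟨_, _, rfl, hUniv⟩

theorem Monitored.boxProd_prod_univ (H : SimpleGraph β) {S : Set V} {v : V}
    (hv : Monitored G S v) (b : β) : Monitored (G □ H) (S ×ˢ Set.univ) (v, b) := by
  induction hv generalizing b with
  | mem h => exact .mem ⟨h, trivial⟩
  | dom h hadj => exact .dom (v := (_, b)) ⟨h, trivial⟩ (Or.inl ⟨hadj, rfl⟩)
  | @prop v w _ hadj _ ih ihall =>
    refine .prop (ih b) (Or.inl ⟨hadj, rfl⟩) ?_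
    rintro ⟨u, c⟩ (⟨hu, rfl⟩ | ⟨-, rfl⟩) hne
    · exact ihall u hu (fun h => hne (h ▸ rfl)) b
    · exact ih c

def SimpleGraph.induceProdUnivIso (G : SimpleGraph V) (H : SimpleGraph β) (S : Set V) :
    (G □ H).induce (S ×ˢ Set.univ) ≃g G.induce S □ H where
  toFun x := (⟨x.1.1, x.2.1⟩, x.1.2)
  invFun p := ⟨(p.1.1, p.2), p.1.2, trivial⟩
  map_rel_iff' := by
    rintro ⟨⟨a, b⟩, _⟩ ⟨⟨c, d⟩, _⟩
    simp [boxProd_adj]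

theorem IsCPDS.boxProd_prod_univ {H : SimpleGraph β} {S : Set V} (hS : IsCPDS G S)
    (hH : H.Connected) : IsCPDS (G □ H) (S ×ˢ Set.univ) :=
  ⟨fun x => (hS.1 x.1).boxProd_prod_univ H x.2,
    (G.induceProdUnivIso H S).connected_iff.mpr (connected_boxProd.mpr ⟨hS.2, hH⟩)⟩

theorem cpdn_boxProd_le_left [Fintype V] [Fintype β] {H : SimpleGraph β}
    (hG : G.Connected) (hH : H.Connected) : cpdn (G □ H) ≤ cpdn G * Fintype.card β := by
  obtain ⟨S, hScard, hS⟩ := exists_isCPDS_card_eq_cpdn hG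
  calc cpdn (G □ H)
      ≤ (S ×ˢ Finset.univ).card := cpdn_le_card (by simpa using hS.boxProd_prod_univ hH)
    _ = cpdn G * Fintype.card β := by rw [Finset.card_product, hScard, Finset.card_univ]

end

theorem stmt_3_general {α β : Type*} [Fintype α] [Fintype β]
    (G : SimpleGraph α) (H : SimpleGraph β)
    (hG : G.Connected) (hH : H.Connected) :
    cpdn (G □ H) ≤ min (cpdn G * Fintype.card β) (cpdn H * Fintype.card α) :=
  le_min (cpdn_boxProd_le_left hG hH)
    ((boxProdComm G H).cpdn_eq ▸ cpdn_boxProd_le_left hH hG)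

/-- `γ_{P,c}(G □ H) ≤ min{γ_{P,c}(G)·|V(H)|, γ_{P,c}(H)·|V(G)|}`. -/
theorem stmt_3 {α β : Type*} [Fintype α] [Fintype β]
    (G : SimpleGraph α) (H : SimpleGraph β)
    (hG : G.Connected) (hH : H.Connected)
    (hGcard : 2 ≤ Fintype.card α) (hHcard : 2 ≤ Fintype.card β) :
    cpdn (G □ H) ≤ min (cpdn G * Fintype.card β) (cpdn H * Fintype.card α) :=
  stmt_3_general G H hG hH
end

section
/- Let G be a connected finite simple graph with at least 3 vertices and let C_n be the cycle on n ≥ 3 vertices. Then γ_{P,c}(G □ C_n) ≤ 2·γ_c(G). -/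
open SimpleGraph

variable {V : Type*} {α β : Type*}

/-!
If `D` dominates `G` and `Z` is a zero forcing set of `H`, then `D × Z` power dominates `G □ H`:
the closed neighbourhood of `D × Z` contains every layer `V(G) × {z}` with `z ∈ Z`, and whenever
`z` forces `w` in `H`, each `(v, z)` forces `(v, w)` in `G □ H`, so the zero forcing process of `H`
is replayed in every copy of `H`. Products of connected sets induce connected subgraphs of
`G □ H`, and two consecutive vertices form a connected zero forcing set of `C_n`; taking `D` a
minimum connected dominating set gives the bound `2 γ_c(G)`.
-/

open Finset

variable {G : SimpleGraph α} {H : SimpleGraph β}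

namespace SimpleGraph

def induceProdIsoBoxProd (s : Set α) (t : Set β) :
    (G □ H).induce (s ×ˢ t) ≃g G.induce s □ H.induce t :=
  ⟨Equiv.Set.prod s t, by
    rintro ⟨⟨a, b⟩, _⟩ ⟨⟨c, d⟩, _⟩
    simp only [boxProd_adj, comap_adj, Function.Embedding.subtype_apply, Subtype.ext_iff]
    rfl⟩

theorem Connected.induce_prod {s : Set α} {t : Set β} (hs : (G.induce s).Connected)
    (ht : (H.induce t).Connected) : ((G □ H).induce (s ×ˢ t)).Connected :=
  induceProdIsoBoxProd s t |>.connected_iff.mpr (hs.boxProd ht)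

theorem Connected.exists_isCDS_card_eq_cdomNum [Fintype α] (hG : G.Connected) :
    ∃ D : Finset α, #D = cdomNum G ∧ IsCDS G D := by
  have hcds : IsCDS G (univ : Finset α) := by
    rw [coe_univ]
    exact ⟨fun v => ⟨v, trivial, .inl rfl⟩, (induceUnivIso G).connected_iff.mpr hG⟩
  exact Nat.sInf_mem (s := {n | ∃ D : Finset α, #D = n ∧ IsCDS G D}) ⟨_, univ, rfl, hcds⟩

end SimpleGraph

theorem IsDomSet.monitored_boxProd {D : Set α} {Z : Set β} (hD : IsDomSet G D) {w : β}
    (hw : Forced H Z w) (v : α) : Monitored (G □ H) (D ×ˢ Z) (v, w) := by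
  induction hw generalizing v with
  | mem hz =>
    obtain ⟨u, hu, rfl | huv⟩ := hD v
    · exact .mem ⟨hu, hz⟩
    · exact .dom (v := (u, _)) ⟨hu, hz⟩ (boxProd_adj_left.mpr huv)
  | force _ hzw _ ihz ihu =>
    refine .prop (ihz v) (boxProd_adj_right.mpr hzw) ?_
    rintro ⟨u, y⟩ (⟨-, rfl⟩ | ⟨hzy, rfl⟩) hne
    · exact ihz u
    · exact ihu y hzy (fun hyw => hne (hyw ▸ rfl)) v

theorem IsDomSet.isPDS_boxProd {D : Set α} {Z : Set β} (hD : IsDomSet G D) (hZ : IsZFS H Z) :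
    IsPDS (G □ H) (D ×ˢ Z) :=
  fun x => hD.monitored_boxProd (hZ x.2) x.1

theorem IsCDS.isCPDS_boxProd {D : Set α} {Z : Set β} (hD : IsCDS G D) (hZ : IsCZFS H Z) :
    IsCPDS (G □ H) (D ×ˢ Z) :=
  ⟨hD.1.isPDS_boxProd hZ.1, hD.2.induce_prod hZ.2⟩

theorem cpdn_boxProd_le_card_mul_card {D : Finset α} {Z : Finset β} (hD : IsCDS G D)
    (hZ : IsCZFS H Z) : cpdn (G □ H) ≤ #D * #Z :=
  Nat.sInf_le ⟨D ×ˢ Z, card_product D Z, by simpa only [coe_product] using hD.isCPDS_boxProd hZ⟩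

open Fin.NatCast Fin.CommRing in
theorem isZFS_cycleGraph_zero_one (m : ℕ) : IsZFS (cycleGraph (m + 2)) {0, 1} := by
  have forced_consecutive : ∀ k : ℕ, Forced (cycleGraph (m + 2)) {0, 1} (k : Fin (m + 2)) ∧
      Forced (cycleGraph (m + 2)) {0, 1} ((k : Fin (m + 2)) + 1) := by
    intro k
    induction k with
    | zero => simpa using ⟨Forced.mem (by simp), Forced.mem (by simp)⟩
    | succ k ih =>
      refine ⟨by simpa using ih.2, ?_⟩
      rw [Nat.cast_succ]
      refine .force ih.2 (cycleGraph_adj.mpr (.inr (add_sub_cancel_left _ 1))) fun u hu hne => ?_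
      have hu' : u ∈ (cycleGraph (m + 2)).neighborSet (k + 1) := hu
      rw [cycleGraph_neighborSet] at hu'
      obtain rfl | rfl := hu'
      · simpa using ih.1
      · exact absurd rfl hne
  intro x
  simpa using (forced_consecutive x).1

theorem isCZFS_cycleGraph_zero_one (m : ℕ) :
    IsCZFS (cycleGraph (m + 2)) ({0, 1} : Finset (Fin (m + 2))) := by
  rw [coe_pair]
  exact ⟨isZFS_cycleGraph_zero_one m,
    induce_pair_connected_of_adj (cycleGraph_adj.mpr (.inr (sub_zero 1)))⟩

theorem stmt_6_general {α : Type*} [Fintype α]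
    (G : SimpleGraph α) (hG : G.Connected)
    (n : ℕ) (hn : 3 ≤ n) :
    cpdn (G □ cycleGraph n) ≤ 2 * cdomNum G := by
  obtain ⟨D, hDcard, hD⟩ := hG.exists_isCDS_card_eq_cdomNum
  obtain ⟨m, rfl⟩ := Nat.exists_eq_add_of_le' (by omega : 2 ≤ n)
  calc cpdn (G □ cycleGraph (m + 2))
      ≤ #D * #{0, 1} := cpdn_boxProd_le_card_mul_card hD (isCZFS_cycleGraph_zero_one m)
    _ ≤ 2 * cdomNum G := by
      rw [hDcard, mul_comm]
      exact Nat.mul_le_mul_right _ card_le_two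

/-- `γ_{P,c}(G □ C_n) ≤ 2·γ_c(G)`. -/
theorem stmt_6 {α : Type*} [Fintype α]
    (G : SimpleGraph α) (hG : G.Connected)
    (hGcard : 3 ≤ Fintype.card α)
    (n : ℕ) (hn : 3 ≤ n) :
    cpdn (G □ cycleGraph n) ≤ 2 * cdomNum G :=
  stmt_6_general G hG n hn
end

section
/- For integers 3 ≤ x ≤ y, the connected power domination number of the Cartesian product of stars satisfies γ_{P,c}(K_{1,x} □ K_{1,y}) = x. -/
open SimpleGraph

variable {V : Type*} {α β : Type*}

/-! For the upper bound take the copy of `K_{1,x}` over the center of `K_{1,y}`, minus one leaf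
`ℓ`. It is a connected star on `x` vertices and dominates everything except the vertices
`(ℓ, j)`, and each `(ℓ, j)` is then forced by `(c, j)`, all of whose other neighbors are
dominated.

For the lower bound, call `{a} × V(K_{1,y})` a row. A connected set `S` of fewer than `x`
vertices avoids two leaf rows `i₁, i₂`: either `S` meets the center row and then at most
`|S| - 1` leaf rows, or it lies inside a single leaf row, since distinct leaf rows are not adjacent.
Likewise (as `x ≤ y`) it avoids two leaf columns `j₁, j₂`. The four vertices `(iₐ, j_b)` form a
fort (every outside vertex adjacent to one of them is adjacent to two) disjoint from `N[S]`, and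
such a fort is never monitored. -/

def IsFort (G : SimpleGraph V) (F : Set V) : Prop :=
  ∀ ⦃v w⦄, v ∉ F → w ∈ F → G.Adj v w → ∃ u ∈ F, u ≠ w ∧ G.Adj v u

theorem IsFort.not_monitored {G : SimpleGraph V} {S F : Set V} (hF : IsFort G F)
    (hSF : ∀ s ∈ S, s ∉ F) (hNF : ∀ s ∈ S, ∀ w ∈ F, ¬ G.Adj s w) {v : V}
    (hv : Monitored G S v) : v ∉ F := by
  induction hv with
  | mem hs => exact hSF _ hs
  | dom hs hadj => exact fun hw => hNF _ hs _ hw hadj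
  | prop _ hadj _ ihv ihall =>
    intro hw
    obtain ⟨u, hu, hne, hvu⟩ := hF ihv hw hadj
    exact ihall u hvu hne hu

theorem IsFort.boxProd {G : SimpleGraph α} {H : SimpleGraph β} {I : Set α} {J : Set β}
    (hI : IsFort G I) (hJ : IsFort H J) : IsFort (G □ H) (I ×ˢ J) := by
  rintro ⟨a', b'⟩ ⟨a, b⟩ hv ⟨ha, hb⟩ hadj
  rcases boxProd_adj.1 hadj with ⟨hG, rfl⟩ | ⟨hH, rfl⟩
  · obtain ⟨a'', ha'', hne, hG'⟩ := hI (fun h => hv ⟨h, hb⟩) ha hG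
    exact ⟨(a'', b'), ⟨ha'', hb⟩, by simpa using hne, boxProd_adj_left.2 hG'⟩
  · obtain ⟨b'', hb'', hne, hH'⟩ := hJ (fun h => hv ⟨ha, h⟩) hb hH
    exact ⟨(a', b''), ⟨ha, hb''⟩, by simpa using hne, boxProd_adj_right.2 hH'⟩

theorem isFort_completeBipartiteGraph_pair {i₁ i₂ : β} (h : i₁ ≠ i₂) :
    IsFort (completeBipartiteGraph α β) {Sum.inr i₁, Sum.inr i₂} := by
  rintro (a | j) w - hw hadj
  · rcases hw with rfl | rfl
    · exact ⟨Sum.inr i₂, by simp, by simpa using h.symm, by simp⟩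
    · exact ⟨Sum.inr i₁, by simp, by simpa using h, by simp⟩
  · rcases hw with rfl | rfl <;> simp at hadj

theorem induce_connected_of_forall_adj {G : SimpleGraph V} {s : Set V} {c : V} (hc : c ∈ s)
    (h : ∀ v ∈ s, v ≠ c → G.Adj c v) : (G.induce s).Connected := by
  refine (connected_iff_exists_forall_reachable _).2 ⟨⟨c, hc⟩, fun ⟨v, hv⟩ => ?_⟩
  by_cases hvc : v = c
  · subst hvc; rfl
  · exact Adj.reachable (by simpa using h v hv hvc)

theorem eq_of_reachable_induce {Γ : SimpleGraph V} {G : SimpleGraph α} {p : V → α}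
    (hp : ∀ u v, Γ.Adj u v → p u = p v ∨ G.Adj (p u) (p v)) {S : Set V}
    (hS : ∀ u ∈ S, ∀ v ∈ S, ¬ G.Adj (p u) (p v)) {u v : S}
    (huv : (Γ.induce S).Reachable u v) : p u = p v := by
  obtain ⟨w⟩ := huv
  induction w with
  | nil => rfl
  | @cons u' v' _ hadj _ ih =>
    exact ((hp _ _ hadj).resolve_right (hS _ u'.2 _ v'.2)).trans ih

theorem exists_two_inr_notMem_image {Γ : SimpleGraph V} [Fintype β] {p : V → α ⊕ β}
    (hp : ∀ u v, Γ.Adj u v → p u = p v ∨ (completeBipartiteGraph α β).Adj (p u) (p v))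
    {S : Finset V} (hS : (Γ.induce (S : Set V)).Preconnected)
    (hβ : 3 ≤ Fintype.card β) (hcard : S.card < Fintype.card β) :
    ∃ i₁ i₂, i₁ ≠ i₂ ∧ ∀ v ∈ S, p v ∉ ({Sum.inr i₁, Sum.inr i₂} : Set (α ⊕ β)) := by
  classical
  set T := S.image p
  have hT : T.toRight.card ≤ Fintype.card β - 2 := by
    rcases T.toLeft.eq_empty_or_nonempty with hL | hL
    · -- `p '' S` is then an independent set, so connectivity makes `p` constant on `S`
      have hinr : ∀ u ∈ S, (p u).isRight := fun u hu => by
        cases hpu : p u with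
        | inl a => exact (Finset.eq_empty_iff_forall_notMem.1 hL a
            (Finset.mem_toLeft.2 (hpu ▸ Finset.mem_image_of_mem p hu))).elim
        | inr _ => rfl
      have hT1 : T.card ≤ 1 := Finset.card_le_one.2 <| by
        simp only [T, Finset.mem_image]
        rintro _ ⟨u, hu, rfl⟩ _ ⟨v, hv, rfl⟩
        refine eq_of_reachable_induce hp (fun u hu v hv => ?_) (hS ⟨u, hu⟩ ⟨v, hv⟩)
        simp [completeBipartiteGraph_adj, hinr u hu, hinr v hv]
      have := T.card_toRight_le
      omega
    · have := T.card_toLeft_add_card_toRight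
      have := hL.card_pos
      have : T.card ≤ S.card := Finset.card_image_le
      omega
  have : 1 < T.toRightᶜ.card := by rw [Finset.card_compl]; omega
  obtain ⟨i₁, h₁, i₂, h₂, hne⟩ := Finset.one_lt_card.1 this
  refine ⟨i₁, i₂, hne, fun v hv => ?_⟩
  rintro (hpv | hpv : p v = _ ∨ p v = _)
  · exact Finset.mem_compl.1 h₁ (by simpa [T, ← hpv] using ⟨v, hv, rfl⟩)
  · exact Finset.mem_compl.1 h₂ (by simpa [T, ← hpv] using ⟨v, hv, rfl⟩)

theorem card_le_card_of_isCPDS {γ δ : Type*} [Fintype β] [Fintype δ]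
    (hβ : 3 ≤ Fintype.card β) (hβδ : Fintype.card β ≤ Fintype.card δ)
    {S : Finset ((α ⊕ β) × (γ ⊕ δ))}
    (hS : IsCPDS (completeBipartiteGraph α β □ completeBipartiteGraph γ δ) S) :
    Fintype.card β ≤ S.card := by
  by_contra! hlt
  obtain ⟨i₁, i₂, hi, hrows⟩ := exists_two_inr_notMem_image (p := Prod.fst)
    (fun _ _ h => (boxProd_adj.1 h).symm.imp And.right And.left) hS.2.preconnected hβ hlt
  obtain ⟨j₁, j₂, hj, hcols⟩ := exists_two_inr_notMem_image (p := Prod.snd)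
    (fun _ _ h => (boxProd_adj.1 h).imp And.right And.left) hS.2.preconnected
    (hβ.trans hβδ) (hlt.trans_le hβδ)
  have hF : IsFort (completeBipartiteGraph α β □ completeBipartiteGraph γ δ)
      ({Sum.inr i₁, Sum.inr i₂} ×ˢ {Sum.inr j₁, Sum.inr j₂}) :=
    (isFort_completeBipartiteGraph_pair hi).boxProd (isFort_completeBipartiteGraph_pair hj)
  refine hF.not_monitored ?_ ?_ (hS.1 (Sum.inr i₁, Sum.inr j₁)) ⟨by simp, by simp⟩
  · exact fun s hs h => hrows s hs h.1
  · rintro s hs w ⟨hw₁, hw₂⟩ hadj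
    rcases boxProd_adj.1 hadj with ⟨-, h⟩ | ⟨-, h⟩
    · exact hcols s hs (h ▸ hw₂)
    · exact hrows s hs (h ▸ hw₁)

section UpperBound

variable {δ : Type*}

theorem isPDS_centerRow_diff_leaf (ℓ : β) :
    IsPDS (completeBipartiteGraph (Fin 1) β □ completeBipartiteGraph (Fin 1) δ)
      (({Sum.inr ℓ}ᶜ : Set (Fin 1 ⊕ β)) ×ˢ {Sum.inl 0}) := by
  have hrow : ∀ a ≠ Sum.inr ℓ, ∀ b,
      Monitored (completeBipartiteGraph (Fin 1) β □ completeBipartiteGraph (Fin 1) δ)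
        ({Sum.inr ℓ}ᶜ ×ˢ {Sum.inl 0}) (a, b) := by
    rintro a ha (c | j)
    · exact .mem ⟨ha, by simp [Subsingleton.elim c 0]⟩
    · exact .dom (v := (a, Sum.inl 0)) ⟨ha, rfl⟩ (boxProd_adj_right.2 (by simp))
  rintro ⟨a, b⟩
  by_cases ha : a = Sum.inr ℓ
  · subst ha
    rcases b with c | j
    · exact .dom (v := (Sum.inl 0, Sum.inl 0)) ⟨by simp, rfl⟩
        (by simp [Subsingleton.elim c 0])
    · refine .prop (hrow (Sum.inl 0) (by simp) (Sum.inr j)) (boxProd_adj_left.2 (by simp)) ?_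
      rintro ⟨a', b'⟩ hadj hne
      refine hrow a' ?_ b'
      rcases boxProd_adj.1 hadj with ⟨-, rfl⟩ | ⟨-, rfl⟩
      · rintro rfl; exact hne rfl
      · simp
  · exact hrow a ha b

theorem induce_centerRow_diff_leaf_connected (ℓ : β) :
    ((completeBipartiteGraph (Fin 1) β □ completeBipartiteGraph (Fin 1) δ).induce
      (({Sum.inr ℓ}ᶜ : Set (Fin 1 ⊕ β)) ×ˢ {Sum.inl 0})).Connected := by
  refine induce_connected_of_forall_adj (c := (Sum.inl 0, Sum.inl 0)) ⟨by simp, rfl⟩ ?_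
  rintro ⟨a | i, b⟩ ⟨-, rfl⟩ hne
  · exact absurd (by simp [Subsingleton.elim a 0]) hne
  · exact boxProd_adj_left.2 (by simp)

theorem exists_isCPDS_card_eq [Fintype β] [DecidableEq β] (ℓ : β) :
    ∃ S : Finset ((Fin 1 ⊕ β) × (Fin 1 ⊕ δ)), S.card = Fintype.card β ∧
      IsCPDS (completeBipartiteGraph (Fin 1) β □ completeBipartiteGraph (Fin 1) δ) S := by
  let S : Finset ((Fin 1 ⊕ β) × (Fin 1 ⊕ δ)) :=
    Finset.univ.erase (Sum.inr ℓ) ×ˢ {Sum.inl 0}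
  have hS : (S : Set ((Fin 1 ⊕ β) × (Fin 1 ⊕ δ))) =
      ({Sum.inr ℓ}ᶜ : Set (Fin 1 ⊕ β)) ×ˢ ({Sum.inl 0} : Set (Fin 1 ⊕ δ)) := by
    simp only [S, Finset.coe_product, Finset.coe_erase, Finset.coe_univ, Finset.coe_singleton,
      Set.compl_eq_univ_sdiff]
  refine ⟨S, by simp [S, add_comm], ?_⟩
  rw [IsCPDS, hS]
  exact ⟨isPDS_centerRow_diff_leaf ℓ, induce_centerRow_diff_leaf_connected ℓ⟩

end UpperBound

/-- `γ_{P,c}(K_{1,x} □ K_{1,y}) = x` for `3 ≤ x ≤ y`. -/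
theorem stmt_11 (x y : ℕ) (hx : 3 ≤ x) (hxy : x ≤ y) :
    cpdn (completeBipartiteGraph (Fin 1) (Fin x) □ completeBipartiteGraph (Fin 1) (Fin y)) =
      x := by
  obtain ⟨S, hS, hcpds⟩ := exists_isCPDS_card_eq (δ := Fin y) (⟨0, by omega⟩ : Fin x)
  rw [Fintype.card_fin] at hS
  refine le_antisymm (Nat.sInf_le ⟨S, hS, hcpds⟩) (le_csInf ⟨x, S, hS, hcpds⟩ ?_)
  rintro _ ⟨T, rfl, hT⟩
  simpa using card_le_card_of_isCPDS (by simpa using hx) (by simpa using hxy) hT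
end

section
/- Let G be a connected finite simple graph with at least 2 vertices having a universal vertex (γ(G) = 1), and for an integer n ≥ 2 let H = G ∘ K̄_n be the lexicographic product of G with the empty graph on n vertices. Then for every integer m ≥ 2, γ_{P,c}(H □ P_m) = 2. -/
/-!
Two adjacent vertices `(v, i)` and `(w, i)` of `H = G ∘ K̄ₙ`, with `v` universal, dominate `H`.
Placed in the first layer of `H □ Pₘ` they monitor that layer, and each monitored layer forces
the next one: every vertex of it has exactly one unmonitored neighbour, its copy one layer up.
A single vertex `s` never suffices, because nothing outside `N[s]` is ever forced: each
neighbour of `s` has two neighbours outside `N[s]`, namely a false twin of `s` (coming from `K̄ₙ`)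
and its own copy in an adjacent layer, or, if it lies in another layer than `s`, two false twins
adjacent to it in its own layer. A false twin of `s` lies outside `N[s]`.
-/

open SimpleGraph

variable {V : Type*} {α β : Type*}

theorem Monitored.mem_of_stalled {G : SimpleGraph V} {S Q : Set V}
    (hSQ : ∀ s ∈ S, s ∈ Q) (hNQ : ∀ s ∈ S, ∀ z, G.Adj s z → z ∈ Q)
    (hQ : ∀ v ∈ Q, ∀ w, G.Adj v w → w ∉ Q → ∃ u, G.Adj v u ∧ u ∉ Q ∧ u ≠ w)
    {z : V} (hz : Monitored G S z) : z ∈ Q := by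
  induction hz with
  | mem hs => exact hSQ _ hs
  | dom hs hadj => exact hNQ _ hs _ hadj
  | prop _ hadj _ ihv ihall =>
    by_contra hw
    obtain ⟨u, hu, huQ, huw⟩ := hQ _ ihv _ hadj hw
    exact huQ (ihall u hu huw)

theorem not_isPDS_singleton {K : SimpleGraph V} {s t : V} (ht : t ∉ insert s (K.neighborSet s))
    (hnbr : ∀ v, K.Adj s v → ∃ u₁ u₂, u₁ ≠ u₂ ∧ K.Adj v u₁ ∧ K.Adj v u₂ ∧
      u₁ ∉ insert s (K.neighborSet s) ∧ u₂ ∉ insert s (K.neighborSet s)) :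
    ¬IsPDS K {s} := by
  set N := insert s (K.neighborSet s)
  have hstalled : ∀ v ∈ N, ∀ w, K.Adj v w → w ∉ N → ∃ u, K.Adj v u ∧ u ∉ N ∧ u ≠ w := by
    rintro v (rfl | hv) w hvw hw
    · exact absurd (Or.inr hvw) hw
    · obtain ⟨u₁, u₂, hne, h₁, h₂, hu₁, hu₂⟩ := hnbr v hv
      by_cases h : u₁ = w
      · exact ⟨u₂, h₂, hu₂, h ▸ hne.symm⟩
      · exact ⟨u₁, h₁, hu₁, h⟩
  intro hpds
  exact ht ((hpds t).mem_of_stalled (by simp [N]) (fun _ h z hz => by simp_all [N]) hstalled)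

theorem cpdn_eq_two {K : SimpleGraph V} {s t : V} (hst : K.Adj s t) (hpds : IsPDS K {s, t})
    (hsingle : ∀ s, ¬IsPDS K {s}) : cpdn K = 2 := by
  classical
  have htwo : 2 ∈ {n | ∃ S : Finset V, S.card = n ∧ IsCPDS K (S : Set V)} :=
    ⟨{s, t}, Finset.card_pair hst.ne, by simpa using ⟨hpds, induce_pair_connected_of_adj hst⟩⟩
  refine le_antisymm (Nat.sInf_le htwo) (le_csInf ⟨2, htwo⟩ ?_)
  rintro _ ⟨S, rfl, hS, hconn⟩
  by_contra! hcard
  interval_cases h : S.card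
  · obtain ⟨⟨_, hu⟩⟩ := hconn.nonempty
    simp [Finset.card_eq_zero.mp h] at hu
  · obtain ⟨u, rfl⟩ := Finset.card_eq_one.mp h
    exact hsingle u (by simpa using hS)

theorem IsDomSet.monitored_boxProd_s13 {W : Type*} {H : SimpleGraph V} {D : Set V}
    (hD : IsDomSet H D) (K : SimpleGraph W) {S : Set (V × W)} {k : W}
    (hS : ∀ u ∈ D, (u, k) ∈ S) (x : V) :
    Monitored (H □ K) S (x, k) := by
  obtain ⟨u, hu, rfl | hux⟩ := hD x
  · exact .mem (hS u hu)
  · exact .dom (hS u hu) (boxProd_adj_left.mpr hux)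

theorem isPDS_boxProd_pathGraph_of_monitored_zero {H : SimpleGraph V} {m : ℕ}
    {S : Set (V × Fin m)} (hm : 0 < m) (h₀ : ∀ x, Monitored (H □ pathGraph m) S (x, ⟨0, hm⟩)) :
    IsPDS (H □ pathGraph m) S := by
  suffices h : ∀ k (hk : k < m) x, Monitored (H □ pathGraph m) S (x, ⟨k, hk⟩) from
    fun ⟨x, k⟩ => h k k.isLt x
  intro k
  induction k using Nat.strong_induction_on with
  | _ k ih =>
    rcases k with _ | k
    · exact fun _ => h₀
    intro hk x
    refine .prop (ih k k.lt_succ_self (by omega) x) (boxProd_adj_right.mpr ?_) ?_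
    · exact pathGraph_adj.mpr (Or.inl rfl)
    rintro ⟨y, j⟩ hadj hne
    rcases boxProd_adj.mp hadj with ⟨-, hj⟩ | ⟨hj, hxy⟩
    · obtain rfl : j = ⟨k, _⟩ := hj.symm
      exact ih k k.lt_succ_self _ y
    · obtain rfl : x = y := hxy
      rcases pathGraph_adj.mp hj with hj | hj
      · exact absurd (by simp [Fin.ext_iff] at hj ⊢; omega) hne
      · exact ih j (by simp at hj; omega) j.isLt x

theorem boxProd_pathGraph_not_isPDS_singleton {H : SimpleGraph V} {m : ℕ} (hm : 2 ≤ m)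
    (htwin : ∀ h, ∃ h', h' ≠ h ∧ ¬H.Adj h h' ∧ ∀ x, H.Adj h x → H.Adj h' x)
    (hdeg : ∀ h, ∃ y₁ y₂, y₁ ≠ y₂ ∧ H.Adj h y₁ ∧ H.Adj h y₂) (s : V × Fin m) :
    ¬IsPDS (H □ pathGraph m) {s} := by
  have : Nontrivial (Fin m) := Fin.nontrivial_iff_two_le.mpr hm
  obtain ⟨h, k⟩ := s
  obtain ⟨h', hh', hnadj, htw⟩ := htwin h
  have htwin_far : (h', k) ∉ insert (h, k) ((H □ pathGraph m).neighborSet (h, k)) := by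
    simp [boxProd_adj, hh', hnadj]
  have hfar : ∀ {x j}, x ≠ h → j ≠ k →
      (x, j) ∉ insert (h, k) ((H □ pathGraph m).neighborSet (h, k)) := by
    intro x j hx hj
    simp [boxProd_adj, hx, hx.symm, hj, hj.symm]
  refine not_isPDS_singleton htwin_far ?_
  rintro ⟨x, j⟩ hadj
  rcases boxProd_adj.mp hadj with ⟨hx, hkj⟩ | ⟨hj, hhx⟩
  · obtain rfl : k = j := hkj
    obtain ⟨k', hk'⟩ := (pathGraph_preconnected m).exists_adj_of_nontrivial k
    exact ⟨(h', k), (x, k'), by simp [hk'.ne], boxProd_adj_left.mpr (htw x hx).symm,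
      boxProd_adj_right.mpr hk', htwin_far, hfar hx.ne' hk'.ne'⟩
  · obtain rfl : h = x := hhx
    obtain ⟨y₁, y₂, hy, hy₁, hy₂⟩ := hdeg h
    exact ⟨(y₁, j), (y₂, j), by simpa using hy, boxProd_adj_left.mpr hy₁,
      boxProd_adj_left.mpr hy₂, hfar hy₁.ne' hj.ne', hfar hy₂.ne' hj.ne'⟩

theorem IsUniversal.exists_adj {G : SimpleGraph α} {v w : α} (hv : _root_.IsUniversal G v)
    (hwv : w ≠ v) (a : α) : ∃ x, G.Adj a x := by
  by_cases ha : a = v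
  · exact ⟨w, ha ▸ hv w hwv⟩
  · exact ⟨v, (hv a ha).symm⟩

theorem IsUniversal.isDomSet_lexProd {G : SimpleGraph α} {v w : α} (hv : _root_.IsUniversal G v)
    (hwv : w ≠ v) (H : SimpleGraph β) (i j : β) : IsDomSet (lexProd G H) {(v, i), (w, j)} := by
  rintro ⟨x, y⟩
  by_cases hx : x = v
  · exact ⟨(w, j), by simp, .inr (.inl (hx ▸ (hv w hwv).symm))⟩
  · exact ⟨(v, i), by simp, .inr (.inl (hv x hx))⟩

theorem lexProd_bot_exists_twin [Nontrivial β] (G : SimpleGraph α) (h : α × β) :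
    ∃ h', h' ≠ h ∧ ¬(lexProd G ⊥).Adj h h' ∧
      ∀ x, (lexProd G ⊥).Adj h x → (lexProd G ⊥).Adj h' x := by
  obtain ⟨b', hb'⟩ := exists_ne h.2
  refine ⟨(h.1, b'), fun he => hb' (congrArg Prod.snd he), ?_, ?_⟩
  · simp [lexProd]
  · rintro x (hx | ⟨-, hx⟩)
    · exact .inl hx
    · exact absurd hx (bot_adj _ _).mp

theorem lexProd_bot_exists_two_adj [Nontrivial β] {G : SimpleGraph α}
    (hG : ∀ a, ∃ x, G.Adj a x) (h : α × β) :
    ∃ y₁ y₂, y₁ ≠ y₂ ∧ (lexProd G ⊥).Adj h y₁ ∧ (lexProd G ⊥).Adj h y₂ := by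
  obtain ⟨x, hx⟩ := hG h.1
  obtain ⟨b₁, b₂, hb⟩ := exists_pair_ne β
  exact ⟨(x, b₁), (x, b₂), by simpa using hb, .inl hx, .inl hx⟩

theorem stmt_13_general {α : Type*} [Fintype α]
    (G : SimpleGraph α)
    (hGcard : 2 ≤ Fintype.card α)
    (hGuniv : ∃ v, _root_.IsUniversal G v)
    (n m : ℕ) (hn : 2 ≤ n) (hm : 2 ≤ m) :
    cpdn ((lexProd G (⊥ : SimpleGraph (Fin n))) □ pathGraph m) = 2 := by
  obtain ⟨v, hv⟩ := hGuniv
  obtain ⟨w, hwv⟩ := Fintype.exists_ne_of_one_lt_card hGcard v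
  have : Nontrivial (Fin n) := Fin.nontrivial_iff_two_le.mpr hn
  let i : Fin n := ⟨0, by omega⟩
  let k : Fin m := ⟨0, by omega⟩
  refine cpdn_eq_two (s := ((v, i), k)) (t := ((w, i), k)) ?_ ?_
    (boxProd_pathGraph_not_isPDS_singleton hm (lexProd_bot_exists_twin G)
      (lexProd_bot_exists_two_adj (hv.exists_adj hwv)))
  · exact boxProd_adj_left.mpr (.inl (hv w hwv))
  · exact isPDS_boxProd_pathGraph_of_monitored_zero _
      ((hv.isDomSet_lexProd hwv ⊥ i i).monitored_boxProd_s13 (k := k) _ (by simp))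

/-- If `γ(G) = 1` and `H = G ∘ K̄_n`, then `γ_{P,c}(H □ P_m) = 2` for `n, m ≥ 2`. -/
theorem stmt_13 {α : Type*} [Fintype α]
    (G : SimpleGraph α) (hG : G.Connected)
    (hGcard : 2 ≤ Fintype.card α)
    (hGuniv : ∃ v, _root_.IsUniversal G v)
    (n m : ℕ) (hn : 2 ≤ n) (hm : 2 ≤ m) :
    cpdn ((lexProd G (⊥ : SimpleGraph (Fin n))) □ pathGraph m) = 2 :=
  stmt_13_general G hGcard hGuniv n m hn hm
end

section
/- Let G be a connected non-bipartite finite simple graph and let 2 ≤ x ≤ y be integers. Then the connected power domination number of the tensor product of G with the complete bipartite graph K_{x,y} equals the connected domination number of the tensor product of G with K_2: γ_{P,c}(G × K_{x,y}) = γ_c(G × K_2). -/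
open SimpleGraph

variable {V : Type*} {α β : Type*}

/-!
Collapsing each part of `K_{x,y}` to one vertex maps `G × K_{x,y}` onto `G × K₂`, and this map
`f` reflects adjacency. Since every vertex of `G × K_{x,y}` has a twin in its fibre, power domination
gains nothing over domination there: whenever `v` would force `w`, the twin of `w` is another
neighbour of `v`, so it is already monitored and `f w` is already dominated by `f S`. Hence `f`
sends connected power dominating sets to connected dominating sets. Conversely a section of `f`
lifts a connected dominating set of `G × K₂`, which has at least two vertices and so gives every
member a neighbour inside it, to a connected dominating set of `G × K_{x,y}`.
-/

open Function

theorem Nat.sInf_eq_sInf_of_forall_exists_le {A B : Set ℕ}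
    (hAB : ∀ n ∈ A, ∃ m ∈ B, m ≤ n) (hBA : ∀ n ∈ B, ∃ m ∈ A, m ≤ n) :
    sInf A = sInf B := by
  have sInf_le_of {A B : Set ℕ} (h : ∀ n ∈ B, ∃ m ∈ A, m ≤ n) (hB : B.Nonempty) :
      sInf A ≤ sInf B := by
    obtain ⟨m, hm, hle⟩ := h _ (Nat.sInf_mem hB)
    exact (Nat.sInf_le hm).trans hle
  rcases A.eq_empty_or_nonempty with rfl | hA
  · have hB : B = ∅ := Set.eq_empty_of_forall_notMem fun n hn => by simpa using hBA n hn
    rw [hB]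
  · have hB : B.Nonempty := by
      obtain ⟨n, hn⟩ := hA
      obtain ⟨m, hm, -⟩ := hAB n hn
      exact ⟨m, hm⟩
    exact (sInf_le_of hBA hB).antisymm (sInf_le_of hAB hA)

theorem SimpleGraph.Connected.induce_image {W : Type*} {H : SimpleGraph V} {K : SimpleGraph W}
    (φ : H →g K) {S : Set V} (hS : (H.induce S).Connected) : (K.induce (φ '' S)).Connected :=
  hS.map (induceHom φ (Set.mapsTo_image φ S)) (Set.surjective_mapsTo_image_restrict φ S)

section Domination

variable {G : SimpleGraph V} {S : Set V}

theorem IsDomSet.isPDS (hS : IsDomSet G S) : IsPDS G S := by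
  intro v
  obtain ⟨u, hu, rfl | hadj⟩ := hS v
  · exact Monitored.mem hu
  · exact Monitored.dom hu hadj

theorem IsCDS.isCPDS (hS : IsCDS G S) : IsCPDS G S :=
  ⟨hS.1.isPDS, hS.2⟩

theorem IsCDS.exists_adj_mem (hG : ∀ c, ¬ G.IsUniversal c) (hS : IsCDS G S) {u : V}
    (hu : u ∈ S) : ∃ d ∈ S, G.Adj d u := by
  have : Nontrivial S := by
    by_contra hS1
    rw [not_nontrivial_iff_subsingleton] at hS1
    obtain ⟨w, huw, hnadj⟩ : ∃ w, u ≠ w ∧ ¬ G.Adj u w := by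
      simpa [SimpleGraph.IsUniversal] using hG u
    obtain ⟨e, he, hew⟩ := hS.1 w
    obtain rfl : e = u := congrArg Subtype.val (Subsingleton.elim (⟨e, he⟩ : S) ⟨u, hu⟩)
    exact hew.elim huw hnadj
  obtain ⟨d, hadj⟩ := hS.2.preconnected.exists_adj_of_nontrivial ⟨u, hu⟩
  exact ⟨d, d.2, hadj.symm⟩

end Domination

section Blowup

variable {W : Type*} {H : SimpleGraph V} {K : SimpleGraph W} {f : V → W}

theorem Monitored.exists_map_dominator (hf : ∀ p q, H.Adj p q ↔ K.Adj (f p) (f q))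
    (htwin : ∀ w, ∃ w', w' ≠ w ∧ f w' = f w) {S : Set V} {w : V} (hw : Monitored H S w) :
    ∃ u ∈ S, f u = f w ∨ K.Adj (f u) (f w) := by
  induction hw with
  | @mem v hv => exact ⟨v, hv, Or.inl rfl⟩
  | @dom v w hv hadj => exact ⟨v, hv, Or.inr ((hf v w).1 hadj)⟩
  | @prop v w _ hadj _ _ ih =>
    obtain ⟨w', hw'w, hfw'⟩ := htwin w
    have hadj' : H.Adj v w' := (hf v w').2 (hfw' ▸ (hf v w).1 hadj)
    simpa only [hfw'] using ih w' hadj' hw'w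

theorem IsCPDS.isCDS_image (hf : ∀ p q, H.Adj p q ↔ K.Adj (f p) (f q))
    (htwin : ∀ w, ∃ w', w' ≠ w ∧ f w' = f w) (hsurj : Surjective f) {S : Set V}
    (hS : IsCPDS H S) : IsCDS K (f '' S) := by
  refine ⟨fun c => ?_, hS.2.induce_image ⟨f, (hf _ _).1⟩⟩
  obtain ⟨p, rfl⟩ := hsurj c
  obtain ⟨u, hu, h⟩ := (hS.1 p).exists_map_dominator hf htwin
  exact ⟨f u, Set.mem_image_of_mem f hu, h⟩

theorem IsCDS.isCPDS_image_of_leftInverse (hf : ∀ p q, H.Adj p q ↔ K.Adj (f p) (f q))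
    {r : W → V} (hr : LeftInverse f r) (hK : ∀ c, ¬ K.IsUniversal c) {D : Set W}
    (hD : IsCDS K D) : IsCPDS H (r '' D) := by
  have hr_adj : ∀ {a v}, K.Adj a (f v) → H.Adj (r a) v := fun {a v} h =>
    (hf _ _).2 (by rwa [hr a])
  refine IsCDS.isCPDS ⟨fun v => ?_, hD.2.induce_image ⟨r, fun h => hr_adj (by rwa [hr])⟩⟩
  obtain ⟨d, hd, hadj⟩ : ∃ d ∈ D, K.Adj d (f v) := by
    obtain ⟨u, hu, rfl | hadj⟩ := hD.1 (f v)
    · exact hD.exists_adj_mem hK hu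
    · exact ⟨u, hu, hadj⟩
  exact ⟨r d, Set.mem_image_of_mem r hd, Or.inr (hr_adj hadj)⟩

theorem cpdn_eq_cdomNum_of_adj_iff (hf : ∀ p q, H.Adj p q ↔ K.Adj (f p) (f q))
    (htwin : ∀ w, ∃ w', w' ≠ w ∧ f w' = f w) {r : W → V} (hr : LeftInverse f r)
    (hK : ∀ c, ¬ K.IsUniversal c) : cpdn H = cdomNum K := by
  classical
  apply Nat.sInf_eq_sInf_of_forall_exists_le
  · rintro _ ⟨S, rfl, hS⟩
    refine ⟨_, ⟨S.image f, rfl, ?_⟩, Finset.card_image_le⟩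
    rw [Finset.coe_image]
    exact hS.isCDS_image hf htwin hr.surjective
  · rintro _ ⟨D, rfl, hD⟩
    refine ⟨_, ⟨D.image r, rfl, ?_⟩, (Finset.card_image_of_injective _ hr.injective).le⟩
    rw [Finset.coe_image]
    exact hD.isCPDS_image_of_leftInverse hf hr hK

end Blowup

section CompleteBipartite

variable {X Y : Type*}

def bipartSide : X ⊕ Y → Fin 2 := Sum.elim (fun _ => 0) (fun _ => 1)

theorem completeBipartiteGraph_adj_iff_bipartSide_ne (s t : X ⊕ Y) :
    (completeBipartiteGraph X Y).Adj s t ↔ bipartSide s ≠ bipartSide t := by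
  cases s <;> cases t <;> simp [bipartSide]

theorem tensorProd_completeBipartiteGraph_adj_iff (G : SimpleGraph α) (p q : α × (X ⊕ Y)) :
    (tensorProd G (completeBipartiteGraph X Y)).Adj p q ↔
      (tensorProd G (⊤ : SimpleGraph (Fin 2))).Adj
        (Prod.map id bipartSide p) (Prod.map id bipartSide q) :=
  and_congr_right' (by rw [completeBipartiteGraph_adj_iff_bipartSide_ne, top_adj]; rfl)

theorem exists_ne_bipartSide_eq [Nontrivial X] [Nontrivial Y] (p : α × (X ⊕ Y)) :
    ∃ p', p' ≠ p ∧ Prod.map id bipartSide p' = Prod.map id bipartSide p := by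
  obtain ⟨a, i | j⟩ := p
  · obtain ⟨i', hi'⟩ := exists_ne i
    exact ⟨(a, .inl i'), by simpa using hi', rfl⟩
  · obtain ⟨j', hj'⟩ := exists_ne j
    exact ⟨(a, .inr j'), by simpa using hj', rfl⟩

noncomputable def bipartSection (X Y : Type*) [Nonempty X] [Nonempty Y] : Fin 2 → X ⊕ Y :=
  ![.inl (Classical.arbitrary X), .inr (Classical.arbitrary Y)]

theorem leftInverse_bipartSide_bipartSection [Nonempty X] [Nonempty Y] :
    LeftInverse (Prod.map id bipartSide) (Prod.map id (bipartSection X Y) : α × Fin 2 → _) := by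
  rintro ⟨a, i⟩
  fin_cases i <;> rfl

theorem not_isUniversal_tensorProd_top_fin_two (G : SimpleGraph α) (c : α × Fin 2) :
    ¬ (tensorProd G (⊤ : SimpleGraph (Fin 2))).IsUniversal c := fun h =>
  G.loopless.irrefl c.1 (@h (c.1, c.2 + 1) fun h' => by simpa using congrArg Prod.snd h').1

end CompleteBipartite

theorem stmt_16_general {α : Type*}
    (G : SimpleGraph α)
    (x y : ℕ) (hx : 2 ≤ x) (hxy : x ≤ y) :
    cpdn (tensorProd G (completeBipartiteGraph (Fin x) (Fin y))) =
      cdomNum (tensorProd G (⊤ : SimpleGraph (Fin 2))) := by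
  have : Nontrivial (Fin x) := Fin.nontrivial_iff_two_le.2 hx
  have : Nontrivial (Fin y) := Fin.nontrivial_iff_two_le.2 (hx.trans hxy)
  exact cpdn_eq_cdomNum_of_adj_iff (tensorProd_completeBipartiteGraph_adj_iff G)
    exists_ne_bipartSide_eq leftInverse_bipartSide_bipartSection
    (not_isUniversal_tensorProd_top_fin_two G)

/-- If `G` is non-bipartite and `2 ≤ x ≤ y`, then
`γ_{P,c}(G × K_{x,y}) = γ_c(G × K₂)`. -/
theorem stmt_16 {α : Type*} [Fintype α]
    (G : SimpleGraph α) (hG : G.Connected) (hGnb : ¬ G.Colorable 2)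
    (x y : ℕ) (hx : 2 ≤ x) (hxy : x ≤ y) :
    cpdn (tensorProd G (completeBipartiteGraph (Fin x) (Fin y))) =
      cdomNum (tensorProd G (⊤ : SimpleGraph (Fin 2))) :=
  stmt_16_general G x y hx hxy
end
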